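/- Let F be a family of nonempty subsets of a finite set N covering N that is closed under arbitrary unions of its members, and let v be a capacity on (F, ⊆). If the Choquet functional f ↦ ∫_F f dv is superadditive on ℝ^N₊, then v is supermodular: for all F, G ∈ F, v(F ∪ G) + v(F ∧ G) ≥ v(F) + v(G), where F ∧ G is the union of all members of F contained in F ∩ G (with v(∅) = 0 if no such member exists). -/

import Mathlib

/-! Apply superadditivity to `1_F` and `1_G`. Pointwise `1_F + 1_G = 1_{F ∪ G} + 1_{F ∩ G}`, and
these two indicators vary together (one set contains the other), so they share a minimiser on
every `H` and the Choquet integral is additive on them. Since `∫ 1_S = Σ_{H ∈ Fam, H ⊆ S} β_H`,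
this gives `v(F ∪ G)` for `S = F ∪ G`; for `S = F ∩ G` it gives `v(F ∧ G)`, because the members
of `Fam` below `F ∩ G` are exactly those below `F ∧ G`, and `F ∧ G` is in `Fam` by
union-closedness (or is `∅`). -/

open scoped Classical

/-- The Choquet integral on a family via the Möbius representation:
∫ f dv = Σ_{F ∈ Fam} β_F · min_{i∈F} f_i. -/
noncomputable def cho {N : Type*} (Fam : Finset (Finset N))
    (hne : ∀ F ∈ Fam, F.Nonempty) (β : Finset N → ℝ) (f : N → ℝ) : ℝ :=
  ∑ F ∈ Fam.attach, β F.1 * F.1.inf' (hne F.1 F.2) f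

theorem Finset.inf'_add_of_monovaryOn {ι α : Type*} [AddCommMonoid α] [LinearOrder α]
    [IsOrderedAddMonoid α] {s : Finset ι} (hs : s.Nonempty) {f g : ι → α} (hfg : MonovaryOn f g s) :
    s.inf' hs (f + g) = s.inf' hs f + s.inf' hs g := by
  refine le_antisymm ?_ (s.le_inf' hs _ fun i hi => add_le_add (s.inf'_le f hi) (s.inf'_le g hi))
  obtain ⟨a, ha, hfa⟩ := s.exists_mem_eq_inf' hs f
  obtain ⟨b, hb, hgb⟩ := s.exists_mem_eq_inf' hs g
  rcases lt_or_ge (g b) (g a) with hlt | hle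
  · -- by monovariance `b` minimises `f` as well
    have hfb : s.inf' hs f = f b := le_antisymm (s.inf'_le f hb) (hfa ▸ hfg hb ha hlt)
    rw [hfb, hgb]
    exact s.inf'_le (f + g) hb
  · have hga : s.inf' hs g = g a := le_antisymm (s.inf'_le g ha) (hgb ▸ hle)
    rw [hfa, hga]
    exact s.inf'_le (f + g) ha

theorem Finset.inf'_indicator_one {ι : Type*} {s : Finset ι} (hs : s.Nonempty) (t : Finset ι) :
    s.inf' hs ((t : Set ι).indicator (1 : ι → ℝ)) = if s ⊆ t then 1 else 0 := by
  split_ifs with hst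
  · rw [Finset.inf'_congr hs rfl (g := fun _ => 1) fun i hi => by simp [hst hi]]
    exact s.inf'_const hs 1
  · obtain ⟨i, hi, hit⟩ := Finset.not_subset.mp hst
    refine le_antisymm ?_
      (s.le_inf' hs _ fun j _ => Set.indicator_nonneg (fun _ _ => zero_le_one) j)
    have := s.inf'_le ((t : Set ι).indicator (1 : ι → ℝ)) hi
    rwa [Set.indicator_of_notMem (Finset.mem_coe.not.mpr hit)] at this

theorem Set.monovary_indicator_one_of_subset {ι : Type*} {s t : Set ι} (hts : t ⊆ s) :
    Monovary (s.indicator (1 : ι → ℝ)) (t.indicator (1 : ι → ℝ)) := by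
  intro i j hij
  have hj : j ∈ t := by
    by_contra hj
    simp only [Set.indicator_of_notMem hj] at hij
    exact hij.not_ge (Set.indicator_nonneg (fun _ _ => zero_le_one) i)
  rw [Set.indicator_of_mem (hts hj)]
  exact Set.indicator_le_self' (fun _ _ => zero_le_one) i

section Choquet

variable {N : Type*} (Fam : Finset (Finset N)) (hne : ∀ F ∈ Fam, F.Nonempty) (β : Finset N → ℝ)

theorem cho_add_of_monovary {f g : N → ℝ} (hfg : Monovary f g) :
    cho Fam hne β (f + g) = cho Fam hne β f + cho Fam hne β g := by
  simp only [cho, ← Finset.sum_add_distrib, ← mul_add,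
    Finset.inf'_add_of_monovaryOn _ (hfg.monovaryOn _)]

theorem cho_indicator_one [DecidableEq N] (S : Finset N) :
    cho Fam hne β ((S : Set N).indicator 1) = ∑ H ∈ Fam.filter (· ⊆ S), β H := by
  rw [Finset.sum_filter, ← Fam.sum_attach (fun H => if H ⊆ S then β H else 0)]
  simp only [cho, Finset.inf'_indicator_one, mul_ite, mul_one, mul_zero]

end Choquet

theorem Finset.filter_subset_sup_filter_subset {N : Type*} [DecidableEq N]
    (Fam : Finset (Finset N)) (S : Finset N) :
    Fam.filter (· ⊆ (Fam.filter (· ⊆ S)).sup id) = Fam.filter (· ⊆ S) := by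
  ext H
  simp only [Finset.mem_filter, and_congr_right_iff]
  intro hH
  constructor
  · exact fun h => h.trans (Finset.sup_le fun K hK => (Finset.mem_filter.mp hK).2)
  · exact fun h => Finset.le_sup (f := id) (Finset.mem_filter.mpr ⟨hH, h⟩)

theorem sum_filter_subset_eq_apply_sup {N : Type*} [DecidableEq N] (Fam : Finset (Finset N))
    (huc : ∀ F ∈ Fam, ∀ G ∈ Fam, F ∪ G ∈ Fam) (v β : Finset N → ℝ) (hvempty : v ∅ = 0)
    (hrep : ∀ G ∈ Fam, v G = ∑ F ∈ Fam.filter (· ⊆ G), β F) (S : Finset N) :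
    ∑ H ∈ Fam.filter (· ⊆ S), β H = v ((Fam.filter (· ⊆ S)).sup id) := by
  rcases (Fam.filter (· ⊆ S)).eq_empty_or_nonempty with hempty | hne
  · simp [hempty, hvempty]
  · have hmem : (Fam.filter (· ⊆ S)).sup id ∈ Fam :=
      SupClosed.finsetSup_mem (s := (Fam : Set (Finset N))) huc hne
        fun H hH => (Finset.mem_filter.mp hH).1
    rw [hrep _ hmem, Finset.filter_subset_sup_filter_subset]

theorem stmt_16 {N : Type*} [DecidableEq N]
    (Fam : Finset (Finset N)) (hne : ∀ F ∈ Fam, F.Nonempty)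
    (huc : ∀ F ∈ Fam, ∀ G ∈ Fam, F ∪ G ∈ Fam)
    (v : Finset N → ℝ)
    (hvempty : v ∅ = 0)
    (β : Finset N → ℝ)
    (hrep : ∀ G ∈ Fam, v G = ∑ F ∈ Fam.filter (fun F => F ⊆ G), β F)
    (hsuper : ∀ f g : N → ℝ, (∀ a, 0 ≤ f a) → (∀ a, 0 ≤ g a) →
        cho Fam hne β f + cho Fam hne β g ≤ cho Fam hne β (f + g)) :
    ∀ F ∈ Fam, ∀ G ∈ Fam,
      v F + v G ≤ v (F ∪ G) + v ((Fam.filter (fun H => H ⊆ F ∩ G)).sup id) := by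
  intro F hF G hG
  have indicator_nonneg (S : Finset N) (a : N) : 0 ≤ (S : Set N).indicator (1 : N → ℝ) a :=
    Set.indicator_nonneg (fun _ _ => zero_le_one) a
  have hsum := hsuper _ _ (indicator_nonneg F) (indicator_nonneg G)
  rw [← Set.indicator_union_add_inter, ← Finset.coe_union, ← Finset.coe_inter,
    cho_add_of_monovary _ _ _ (Set.monovary_indicator_one_of_subset
      (Finset.coe_subset.mpr Finset.inter_subset_union))] at hsum
  simpa only [cho_indicator_one, ← hrep F hF, ← hrep G hG, ← hrep _ (huc F hF G hG),
    sum_filter_subset_eq_apply_sup Fam huc v β hvempty hrep] using hsum
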